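/- arXiv:1107.5346 — 7 statements merged into one kernel-verified Lean document; each statement's English description precedes it below -/
import Mathlib

section
/- Let A₀ > 0 and 0 < δ < 1/4 be real numbers. Let H : ℝ → ℝ be differentiable on [0,δ) with H(0) = 0, and let φ, ξ : ℝ → ℝ be continuous on [0,δ) with φ(t) > A₀/4 and 0 < ξ(t) < 4·A₀ for all t ∈ [0,δ). If H'(t)·φ(t) ≤ −∫₀ᵗ H(s)·ξ(s) ds for all t ∈ [0,δ), then H(t) ≤ 0 for all t ∈ [0,δ). -/
/-!
Fix `p ∈ [0, δ)` and let `-N = H(q) ≤ 0` be the minimum of `H` on `[0, p]`.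
Since `0 < ξ < 4A₀`, the integral inequality gives `H'(s)·φ(s) ≤ 4A₀·N·s`, and `φ > A₀/4`
turns this into `H'(s) ≤ 16·N·s ≤ 4N` on `[0, p]`. Integrating from `q` to `p`,
`H(p) ≤ -N + 4N(p - q) ≤ 0` because `p - q < 1/4`.
-/

open Set MeasureTheory

theorem le_of_mul_le_mul_of_lt_of_nonneg {a b c φ : ℝ} (hc : 0 < c) (hcφ : c < φ) (hb : 0 ≤ b)
    (h : a * φ ≤ c * b) : a ≤ b := by
  by_contra! hba
  nlinarith [mul_lt_mul_of_pos_left hcφ (hb.trans_lt hba), mul_lt_mul_of_pos_right hba hc]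

theorem neg_integral_mul_le_of_bounds {f g : ℝ → ℝ} {a b M N : ℝ} (hab : a ≤ b) (hN : 0 ≤ N)
    (hfg : IntervalIntegrable (fun r => f r * g r) volume a b)
    (hf : ∀ r ∈ Icc a b, -N ≤ f r) (hg : ∀ r ∈ Icc a b, 0 ≤ g r ∧ g r ≤ M) :
    -∫ r in a..b, f r * g r ≤ M * N * (b - a) := by
  have hpointwise : ∀ r ∈ Icc a b, -(M * N) ≤ f r * g r := fun r hr => by
    nlinarith [mul_le_mul_of_nonneg_right (hf r hr) (hg r hr).1,
      mul_le_mul_of_nonneg_left (hg r hr).2 hN]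
  have := intervalIntegral.integral_mono_on hab intervalIntegrable_const hfg hpointwise
  rw [intervalIntegral.integral_const, smul_eq_mul] at this
  linarith

theorem nonpos_of_deriv_right_le_neg_four_mul {H H' : ℝ → ℝ} {q p : ℝ} (hqp : q ≤ p)
    (hpq : 4 * (p - q) ≤ 1) (hH : ContinuousOn H (Icc q p))
    (hH' : ∀ x ∈ Ico q p, HasDerivWithinAt H (H' x) (Ici x) x)
    (hHq : H q ≤ 0) (hbound : ∀ x ∈ Ico q p, H' x ≤ -4 * H q) : H p ≤ 0 := by
  have hlinear := image_le_of_deriv_right_le_deriv_boundary hH hH'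
    (B := fun x => H q + -4 * H q * (x - q)) (by simp) (by fun_prop)
    (fun x _ => ((hasDerivAt_id x).sub_const q |>.const_mul (-4 * H q)
      |>.const_add (H q)).hasDerivWithinAt) (by simpa using hbound) (right_mem_Icc.2 hqp)
  nlinarith

theorem stmt_0_general (A₀ δ : ℝ) (hA₀ : 0 < A₀) (hδ : δ < 1/4)
    (H H' φ ξ : ℝ → ℝ)
    (hHdiff : ∀ t ∈ Set.Ico (0:ℝ) δ, HasDerivWithinAt H (H' t) (Set.Ico 0 δ) t)
    (hH0 : H 0 = 0)
    (hξcont : ContinuousOn ξ (Set.Ico 0 δ))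
    (hφ : ∀ t ∈ Set.Ico (0:ℝ) δ, A₀ / 4 < φ t)
    (hξpos : ∀ t ∈ Set.Ico (0:ℝ) δ, 0 < ξ t)
    (hξlt : ∀ t ∈ Set.Ico (0:ℝ) δ, ξ t < 4 * A₀)
    (hineq : ∀ t ∈ Set.Ico (0:ℝ) δ,
      H' t * φ t ≤ - ∫ s in (0:ℝ)..t, H s * ξ s) :
    ∀ t ∈ Set.Ico (0:ℝ) δ, H t ≤ 0 := by
  intro p ⟨hp0, hpδ⟩
  have hsub : Icc 0 p ⊆ Ico 0 δ := fun x hx => ⟨hx.1, hx.2.trans_lt hpδ⟩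
  have hHcont : ContinuousOn H (Ico 0 δ) := fun x hx => (hHdiff x hx).continuousWithinAt
  obtain ⟨q, hq, hqmin⟩ := isCompact_Icc.exists_isMinOn (nonempty_Icc.2 hp0) (hHcont.mono hsub)
  have hHq : H q ≤ 0 := hH0 ▸ hqmin ⟨le_rfl, hp0⟩
  have hderiv : ∀ s ∈ Icc 0 p, H' s ≤ -4 * H q := by
    intro s hs
    have hsub_s : Icc 0 s ⊆ Ico 0 δ := (Icc_subset_Icc_right hs.2).trans hsub
    have hintegral := neg_integral_mul_le_of_bounds (M := 4 * A₀) hs.1 (neg_nonneg.2 hHq)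
      (((hHcont.mul hξcont).mono hsub_s).intervalIntegrable_of_Icc hs.1)
      (fun r hr => (neg_neg (H q)).le.trans (hqmin (Icc_subset_Icc_right hs.2 hr)))
      (fun r hr => ⟨(hξpos r (hsub_s hr)).le, (hξlt r (hsub_s hr)).le⟩)
    have hs4 : s < 1 / 4 := (hsub hs).2.trans hδ
    have hH's : H' s ≤ 16 * -H q * s := le_of_mul_le_mul_of_lt_of_nonneg (by positivity)
      (hφ s (hsub hs)) (by nlinarith [hs.1]) (by linarith [hineq s (hsub hs)])
    nlinarith [hs.1]
  have hqp_sub : Icc q p ⊆ Icc 0 p := Icc_subset_Icc_left hq.1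
  refine nonpos_of_deriv_right_le_neg_four_mul hq.2 (by linarith [hq.1])
    (hHcont.mono (hqp_sub.trans hsub)) (fun x hx => ?_) hHq
    (fun x hx => hderiv x (hqp_sub (Ico_subset_Icc_self hx)))
  have hx' : x ∈ Ico 0 δ := hsub (hqp_sub (Ico_subset_Icc_self hx))
  exact (hHdiff x hx').mono_of_mem_nhdsWithin
    (Filter.mem_of_superset (Ico_mem_nhdsGE hx'.2) (Ico_subset_Ico_left hx'.1))

/-- Case 1 (R₀ > 0) of Claim 1: the integro-differential inequality
`H'(t)·φ(t) ≤ −∫₀ᵗ H(s)·ξ(s) ds` forces `H ≤ 0` on `[0, δ)`. -/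
theorem stmt_0 (A₀ δ : ℝ) (hA₀ : 0 < A₀) (hδ0 : 0 < δ) (hδ : δ < 1/4)
    (H H' φ ξ : ℝ → ℝ)
    (hHdiff : ∀ t ∈ Set.Ico (0:ℝ) δ, HasDerivWithinAt H (H' t) (Set.Ico 0 δ) t)
    (hH0 : H 0 = 0)
    (hφcont : ContinuousOn φ (Set.Ico 0 δ))
    (hξcont : ContinuousOn ξ (Set.Ico 0 δ))
    (hφ : ∀ t ∈ Set.Ico (0:ℝ) δ, A₀ / 4 < φ t)
    (hξpos : ∀ t ∈ Set.Ico (0:ℝ) δ, 0 < ξ t)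
    (hξlt : ∀ t ∈ Set.Ico (0:ℝ) δ, ξ t < 4 * A₀)
    (hineq : ∀ t ∈ Set.Ico (0:ℝ) δ,
      H' t * φ t ≤ - ∫ s in (0:ℝ)..t, H s * ξ s) :
    ∀ t ∈ Set.Ico (0:ℝ) δ, H t ≤ 0 :=
  stmt_0_general A₀ δ hA₀ hδ H H' φ ξ hHdiff hH0 hξcont hφ hξpos hξlt hineq
end

section
/- Let A₀ > 0 and 0 < δ < 1/4 be real numbers. Let H : ℝ → ℝ be differentiable on [0,δ) with H(0) = 0, and let φ, ξ : ℝ → ℝ be continuous on [0,δ) with φ(t) > A₀/4 and 0 < ξ(t) < 4·A₀ for all t ∈ [0,δ). If H'(t)·φ(t) ≤ ∫₀ᵗ H(s)·ξ(s) ds for all t ∈ [0,δ), then H(t) ≤ 0 for all t ∈ [0,δ). -/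
/-!
Suppose `H t₁ > 0` and let `M = H T > 0` be the maximum of `H` on `[0, t₁]`.
For `0 < x < T` the integrand satisfies `H ξ ≤ 4 A₀ M`, so `H' x · φ x ≤ 4 A₀ M T`,
and since `φ > A₀ / 4` this gives `H' x ≤ 16 M T`. The mean value theorem then yields
`M = H T - H 0 ≤ 16 M T² < M`, because `T < 1/4`.
-/

open Set

lemma intervalIntegral.integral_mul_le_of_le {f g : ℝ → ℝ} {a b M K : ℝ} (hab : a ≤ b)
    (hfg : IntervalIntegrable (fun s => f s * g s) MeasureTheory.volume a b)
    (hf : ∀ s ∈ Icc a b, f s ≤ M) (hg₀ : ∀ s ∈ Icc a b, 0 ≤ g s)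
    (hgK : ∀ s ∈ Icc a b, g s ≤ K) (hM : 0 ≤ M) :
    ∫ s in a..b, f s * g s ≤ M * K * (b - a) :=
  calc ∫ s in a..b, f s * g s ≤ ∫ _ in a..b, M * K :=
        intervalIntegral.integral_mono_on hab hfg intervalIntegrable_const
          fun s hs => mul_le_mul (hf s hs) (hgK s hs) (hg₀ s hs) hM
    _ = M * K * (b - a) := by rw [intervalIntegral.integral_const, smul_eq_mul, mul_comm]

lemma le_div_of_mul_le_of_lt {a p c B : ℝ} (h : a * p ≤ B) (hc : 0 < c) (hcp : c < p)
    (hB : 0 ≤ B) : a ≤ B / c := by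
  rw [le_div_iff₀ hc]
  rcases le_or_gt a 0 with ha | ha
  · nlinarith
  · exact (mul_le_mul_of_nonneg_left hcp.le ha.le).trans h

lemma le_div_of_mul_le_integral_mul {f g : ℝ → ℝ} {a b y p c M K : ℝ} (hab : a ≤ b)
    (hfg : IntervalIntegrable (fun s => f s * g s) MeasureTheory.volume a b)
    (hf : ∀ s ∈ Icc a b, f s ≤ M) (hg₀ : ∀ s ∈ Icc a b, 0 ≤ g s)
    (hgK : ∀ s ∈ Icc a b, g s ≤ K) (hM : 0 ≤ M) (hc : 0 < c) (hcp : c < p)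
    (h : y * p ≤ ∫ s in a..b, f s * g s) : y ≤ M * K * (b - a) / c := by
  have ha : a ∈ Icc a b := left_mem_Icc.2 hab
  have hK : 0 ≤ K := (hg₀ a ha).trans (hgK a ha)
  exact le_div_of_mul_le_of_lt
    (h.trans (intervalIntegral.integral_mul_le_of_le hab hfg hf hg₀ hgK hM)) hc hcp
    (by have := sub_nonneg.2 hab; positivity)

lemma sub_le_mul_sub_of_hasDerivAt_le {f f' : ℝ → ℝ} {a b C : ℝ} (hab : a ≤ b)
    (hf : ContinuousOn f (Icc a b)) (hderiv : ∀ x ∈ Ioo a b, HasDerivAt f (f' x) x)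
    (hle : ∀ x ∈ Ioo a b, f' x ≤ C) : f b - f a ≤ C * (b - a) := by
  refine (convex_Icc a b).image_sub_le_mul_sub_of_deriv_le hf ?_ ?_ a (left_mem_Icc.2 hab) b
    (right_mem_Icc.2 hab) hab <;> rw [interior_Icc]
  · exact fun x hx => (hderiv x hx).differentiableAt.differentiableWithinAt
  · exact fun x hx => (hderiv x hx).deriv ▸ hle x hx

theorem stmt_1_general (A₀ δ : ℝ) (hA₀ : 0 < A₀) (hδ : δ < 1/4)
    (H H' φ ξ : ℝ → ℝ)
    (hHdiff : ∀ t ∈ Set.Ico (0:ℝ) δ, HasDerivWithinAt H (H' t) (Set.Ico 0 δ) t)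
    (hH0 : H 0 = 0)
    (hξcont : ContinuousOn ξ (Set.Ico 0 δ))
    (hφ : ∀ t ∈ Set.Ico (0:ℝ) δ, A₀ / 4 < φ t)
    (hξpos : ∀ t ∈ Set.Ico (0:ℝ) δ, 0 < ξ t)
    (hξlt : ∀ t ∈ Set.Ico (0:ℝ) δ, ξ t < 4 * A₀)
    (hineq : ∀ t ∈ Set.Ico (0:ℝ) δ,
      H' t * φ t ≤ ∫ s in (0:ℝ)..t, H s * ξ s) :
    ∀ t ∈ Set.Ico (0:ℝ) δ, H t ≤ 0 := by
  intro t₁ ht₁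
  by_contra! hpos
  have hHcont : ContinuousOn H (Ico 0 δ) := fun x hx => (hHdiff x hx).continuousWithinAt
  obtain ⟨T, hT, hmax⟩ := isCompact_Icc.exists_isMaxOn (nonempty_Icc.2 ht₁.1)
    (hHcont.mono (Icc_subset_Ico_right ht₁.2))
  have hTδ : T < δ := hT.2.trans_lt ht₁.2
  have hsub : Icc 0 T ⊆ Ico 0 δ := Icc_subset_Ico_right hTδ
  have hM : 0 < H T := hpos.trans_le (hmax (right_mem_Icc.2 ht₁.1))
  have hH'le : ∀ x ∈ Ioo 0 T, H' x ≤ 16 * H T * T := by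
    intro x hx
    have hx_mem : x ∈ Ico 0 δ := hsub (Ioo_subset_Icc_self hx)
    have hIcc : Icc 0 x ⊆ Ico 0 δ := (Icc_subset_Icc_right hx.2.le).trans hsub
    calc H' x ≤ H T * (4 * A₀) * (x - 0) / (A₀ / 4) :=
          le_div_of_mul_le_integral_mul hx.1.le
            (((hHcont.mono hIcc).mul (hξcont.mono hIcc)).intervalIntegrable_of_Icc hx.1.le)
            (fun s hs => hmax (Icc_subset_Icc_right (hx.2.le.trans hT.2) hs))
            (fun s hs => (hξpos s (hIcc hs)).le) (fun s hs => (hξlt s (hIcc hs)).le) hM.le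
            (by positivity) (hφ x hx_mem) (hineq x hx_mem)
      _ = 16 * H T * x := by field_simp; ring
      _ ≤ 16 * H T * T := by gcongr; exact hx.2.le
  have hMVT := sub_le_mul_sub_of_hasDerivAt_le hT.1 (hHcont.mono hsub)
    (fun x hx => (hHdiff x (hsub (Ioo_subset_Icc_self hx))).hasDerivAt
      (Ico_mem_nhds hx.1 (hx.2.trans hTδ))) hH'le
  rw [hH0, sub_zero, sub_zero] at hMVT
  have hT2 : T * T < 1 / 16 := by nlinarith [hT.1]
  nlinarith [mul_lt_mul_of_pos_left hT2 hM]

/-- Case 3 (R₀ < 0) of Claim 1: the integro-differential inequality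
`H'(t)·φ(t) ≤ ∫₀ᵗ H(s)·ξ(s) ds` forces `H ≤ 0` on `[0, δ)`. -/
theorem stmt_1 (A₀ δ : ℝ) (hA₀ : 0 < A₀) (hδ0 : 0 < δ) (hδ : δ < 1/4)
    (H H' φ ξ : ℝ → ℝ)
    (hHdiff : ∀ t ∈ Set.Ico (0:ℝ) δ, HasDerivWithinAt H (H' t) (Set.Ico 0 δ) t)
    (hH0 : H 0 = 0)
    (hφcont : ContinuousOn φ (Set.Ico 0 δ))
    (hξcont : ContinuousOn ξ (Set.Ico 0 δ))
    (hφ : ∀ t ∈ Set.Ico (0:ℝ) δ, A₀ / 4 < φ t)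
    (hξpos : ∀ t ∈ Set.Ico (0:ℝ) δ, 0 < ξ t)
    (hξlt : ∀ t ∈ Set.Ico (0:ℝ) δ, ξ t < 4 * A₀)
    (hineq : ∀ t ∈ Set.Ico (0:ℝ) δ,
      H' t * φ t ≤ ∫ s in (0:ℝ)..t, H s * ξ s) :
    ∀ t ∈ Set.Ico (0:ℝ) δ, H t ≤ 0 :=
  stmt_1_general A₀ δ hA₀ hδ H H' φ ξ hHdiff hH0 hξcont hφ hξpos hξlt hineq
end

section
/- Let A₀ > 0 and 0 < δ < 1/4 be real numbers. Let H : ℝ → ℝ be differentiable on [0,δ) with H(0) = 0, and let φ, ξ : ℝ → ℝ be continuous on [0,δ) with φ(t) > A₀/4 and 0 < ξ(t) < 4·A₀ for all t ∈ [0,δ). Suppose H'(t)·φ(t) ≤ ∫₀ᵗ H(s)·ξ(s) ds for all t ∈ [0,δ). If t₀ ∈ (0,δ) satisfies H(t₀) > 0, then the set I := { t ∈ [0,t₀] : H(t) ≥ H(t₀) } has infimum equal to 0. -/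
/-!
Let `m` be the first time in `[0, t₀]` at which `H` reaches the level `H t₀ > 0`. On `[0, m]` we
have `H ≤ H m`, so the integro-differential inequality and the bounds on `φ` and `ξ` give
`H' t ≤ 16 H(m) t`. Integrating from `H 0 = 0` yields `H m ≤ 8 H(m) m² < H m`, as `m < 1/4`.
So the hypotheses are in fact inconsistent; in the paper the claim is a step towards exactly this
contradiction.
-/

open Set

theorem intervalIntegral_le_mul_of_le {f : ℝ → ℝ} {a b C : ℝ} (hab : a ≤ b) (hC : 0 ≤ C)
    (hf : ∀ x ∈ Icc a b, f x ≤ C) : ∫ x in a..b, f x ≤ C * (b - a) := by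
  by_cases hint : IntervalIntegrable f MeasureTheory.volume a b
  · calc ∫ x in a..b, f x ≤ ∫ _ in a..b, C :=
          intervalIntegral.integral_mono_on hab hint intervalIntegrable_const hf
      _ = C * (b - a) := by simp [mul_comm]
  · -- the integral is the junk value `0` here, hence `0 ≤ C`
    rw [intervalIntegral.integral_undef hint]
    exact mul_nonneg hC (sub_nonneg.2 hab)

theorem image_le_of_deriv_right_le_mul {f f' : ℝ → ℝ} {b K : ℝ}
    (hf : ContinuousOn f (Icc 0 b)) (hf' : ∀ x ∈ Ico 0 b, HasDerivWithinAt f (f' x) (Ici x) x)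
    (bound : ∀ x ∈ Ico 0 b, f' x ≤ K * x) : ∀ x ∈ Icc 0 b, f x ≤ f 0 + K / 2 * x ^ 2 := by
  have hB : ∀ x, HasDerivAt (fun y => f 0 + K / 2 * y ^ 2) (K * x) x := fun x =>
    (((hasDerivAt_pow 2 x).const_mul (K / 2)).const_add (f 0)).congr_deriv (by norm_num; ring)
  exact image_le_of_deriv_right_le_deriv_boundary hf hf' (by simp)
    (fun x _ => (hB x).continuousAt.continuousWithinAt) (fun x _ => (hB x).hasDerivWithinAt) bound

theorem ContinuousOn.sInf_mem_setOf_le {f : ℝ → ℝ} {a b c : ℝ} (hf : ContinuousOn f (Icc a b))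
    (hab : a ≤ b) (hc : c ≤ f b) :
    sInf {t | t ∈ Icc a b ∧ c ≤ f t} ∈ {t | t ∈ Icc a b ∧ c ≤ f t} :=
  (hf.preimage_isClosed_of_isClosed isClosed_Icc isClosed_Ici).csInf_mem
    ⟨b, ⟨hab, le_rfl⟩, hc⟩ ⟨a, fun _ ht => ht.1.1⟩

theorem le_of_mul_le_of_lt {x y c B : ℝ} (hc : 0 < c) (hcx : c < x) (hB : 0 ≤ B)
    (h : y * x ≤ B) : y * c ≤ B := by
  rcases le_or_gt y 0 with hy | hy
  · exact (mul_nonpos_of_nonpos_of_nonneg hy hc.le).trans hB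
  · exact (mul_lt_mul_of_pos_left hcx hy).le.trans h

theorem le_mul_of_mul_le_integral {H ξ : ℝ → ℝ} {A M t y φt : ℝ} (hA : 0 < A) (ht : 0 ≤ t)
    (hM : 0 ≤ M) (hH : ∀ s ∈ Icc 0 t, H s ≤ M) (hξ_nonneg : ∀ s ∈ Icc 0 t, 0 ≤ ξ s)
    (hξ_le : ∀ s ∈ Icc 0 t, ξ s ≤ 4 * A) (hφt : A / 4 < φt)
    (hineq : y * φt ≤ ∫ s in (0:ℝ)..t, H s * ξ s) : y ≤ 16 * M * t := by
  have hint := intervalIntegral_le_mul_of_le ht (by positivity : 0 ≤ M * (4 * A))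
    fun s hs => mul_le_mul (hH s hs) (hξ_le s hs) (hξ_nonneg s hs) hM
  have hy := le_of_mul_le_of_lt (by positivity) hφt (mul_nonneg (by positivity) (sub_nonneg.2 ht))
    (hineq.trans hint)
  nlinarith

theorem stmt_2_general (A₀ δ : ℝ) (hA₀ : 0 < A₀) (hδ : δ < 1/4)
    (H H' φ ξ : ℝ → ℝ)
    (hHdiff : ∀ t ∈ Set.Ico (0:ℝ) δ, HasDerivWithinAt H (H' t) (Set.Ico 0 δ) t)
    (hH0 : H 0 = 0)
    (hφ : ∀ t ∈ Set.Ico (0:ℝ) δ, A₀ / 4 < φ t)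
    (hξpos : ∀ t ∈ Set.Ico (0:ℝ) δ, 0 < ξ t)
    (hξlt : ∀ t ∈ Set.Ico (0:ℝ) δ, ξ t < 4 * A₀)
    (hineq : ∀ t ∈ Set.Ico (0:ℝ) δ,
      H' t * φ t ≤ ∫ s in (0:ℝ)..t, H s * ξ s)
    (t₀ : ℝ) (ht₀ : t₀ ∈ Set.Ioo (0:ℝ) δ) (hHt₀ : 0 < H t₀) :
    sInf {t : ℝ | t ∈ Set.Icc (0:ℝ) t₀ ∧ H t₀ ≤ H t} = 0 := by
  have hHcont : ContinuousOn H (Ico 0 δ) := fun t ht => (hHdiff t ht).continuousWithinAt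
  obtain ⟨⟨hm0, hmt₀⟩, hHm⟩ :=
    (hHcont.mono (Icc_subset_Ico_right ht₀.2)).sInf_mem_setOf_le ht₀.1.le le_rfl
  set m := sInf {t | t ∈ Icc 0 t₀ ∧ H t₀ ≤ H t}
  exfalso
  have hm_sub : Icc 0 m ⊆ Ico 0 δ := Icc_subset_Ico_right (hmt₀.trans_lt ht₀.2)
  have hHm_pos : 0 < H m := hHt₀.trans_le hHm
  have hmax : ∀ s ∈ Icc 0 m, H s ≤ H m := by
    intro s hs
    rcases hs.2.eq_or_lt with rfl | hlt
    · rfl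
    · have hs_notMem := notMem_of_lt_csInf hlt ⟨0, fun _ ht => ht.1.1⟩
      exact (not_le.1 fun h => hs_notMem ⟨⟨hs.1, hs.2.trans hmt₀⟩, h⟩).le.trans hHm
  have hderiv : ∀ t ∈ Ico 0 m, H' t ≤ 16 * H m * t := fun t ht =>
    have hIcc : Icc 0 t ⊆ Icc 0 m := Icc_subset_Icc_right ht.2.le
    le_mul_of_mul_le_integral hA₀ ht.1 hHm_pos.le (fun s hs => hmax s (hIcc hs))
      (fun s hs => (hξpos s (hm_sub (hIcc hs))).le) (fun s hs => (hξlt s (hm_sub (hIcc hs))).le)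
      (hφ t (hm_sub (Ico_subset_Icc_self ht))) (hineq t (hm_sub (Ico_subset_Icc_self ht)))
  have hHm_le := image_le_of_deriv_right_le_mul (hHcont.mono hm_sub)
    (fun x hx => (hHdiff x (hm_sub (Ico_subset_Icc_self hx))).mono_of_mem_nhdsWithin
      (Ico_mem_nhdsGE_of_mem (hm_sub (Ico_subset_Icc_self hx)))) hderiv m (right_mem_Icc.2 hm0)
  have hm_sq : m ^ 2 < 1 / 16 := by
    have hm_lt : m < 1 / 4 := (hmt₀.trans_lt ht₀.2).trans hδ
    nlinarith
  rw [hH0] at hHm_le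
  nlinarith [mul_lt_mul_of_pos_left hm_sq hHm_pos]

/-- Claim 2 in Case 3 of Theorem 2: under the integro-differential inequality
`H'(t)·φ(t) ≤ ∫₀ᵗ H(s)·ξ(s) ds`, if `t₀ ∈ (0,δ)` and `H(t₀) > 0`, then the set
`I = { t ∈ [0,t₀] : H(t) ≥ H(t₀) }` has infimum `0`. -/
theorem stmt_2 (A₀ δ : ℝ) (hA₀ : 0 < A₀) (hδ0 : 0 < δ) (hδ : δ < 1/4)
    (H H' φ ξ : ℝ → ℝ)
    (hHdiff : ∀ t ∈ Set.Ico (0:ℝ) δ, HasDerivWithinAt H (H' t) (Set.Ico 0 δ) t)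
    (hH0 : H 0 = 0)
    (hφcont : ContinuousOn φ (Set.Ico 0 δ))
    (hξcont : ContinuousOn ξ (Set.Ico 0 δ))
    (hφ : ∀ t ∈ Set.Ico (0:ℝ) δ, A₀ / 4 < φ t)
    (hξpos : ∀ t ∈ Set.Ico (0:ℝ) δ, 0 < ξ t)
    (hξlt : ∀ t ∈ Set.Ico (0:ℝ) δ, ξ t < 4 * A₀)
    (hineq : ∀ t ∈ Set.Ico (0:ℝ) δ,
      H' t * φ t ≤ ∫ s in (0:ℝ)..t, H s * ξ s)
    (t₀ : ℝ) (ht₀ : t₀ ∈ Set.Ioo (0:ℝ) δ) (hHt₀ : 0 < H t₀) :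
    sInf {t : ℝ | t ∈ Set.Icc (0:ℝ) t₀ ∧ H t₀ ≤ H t} = 0 :=
  stmt_2_general A₀ δ hA₀ hδ H H' φ ξ hHdiff hH0 hφ hξpos hξlt hineq t₀ ht₀ hHt₀
end

section
/- Let A₀ > 0 and 0 < δ < 1/4 be real numbers. Let H : ℝ → ℝ be differentiable on [0,δ), and let φ, ξ : ℝ → ℝ be continuous on [0,δ) with φ(t) > A₀/4 and 0 < ξ(t) < 4·A₀ for all t ∈ [0,δ). Suppose H'(t)·φ(t) ≤ −∫₀ᵗ H(s)·ξ(s) ds for all t ∈ [0,δ). If 0 ≤ t₋ < t₊ < δ, H(t₋) < 0, and H(t₋) ≤ H(t) for all t ∈ [0,t₊], then H(t₊) ≤ H(t₋)·(1 − 16·δ²). -/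
/-! By the mean value theorem, `H(t₊) - H(t₋) = H'(c)(t₊ - t₋)` for some `c ∈ (t₋, t₊)`.
Since `H(t₋) < 0` is the minimum of `H` on `[0, c]` and `0 < ξ < 4A₀`, the integrand satisfies
`H ξ ≥ 4A₀ H(t₋)`, so the integral inequality and `φ > A₀/4` give `H'(c) ≤ -16 H(t₋) c`.
Finally `c (t₊ - t₋) ≤ δ²`. -/

open Set

theorem exists_hasDerivWithinAt_eq_slope_of_Icc_subset {f f' : ℝ → ℝ} {s : Set ℝ} {a b : ℝ}
    (hab : a < b) (hs : Icc a b ⊆ s) (hf : ∀ x ∈ s, HasDerivWithinAt f (f' x) s x) :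
    ∃ c ∈ Ioo a b, f' c = (f b - f a) / (b - a) :=
  exists_hasDerivAt_eq_slope f f' hab
    (fun x hx => ((hf x (hs hx)).continuousWithinAt).mono hs)
    (fun x hx => ((hf x (hs (Ioo_subset_Icc_self hx))).mono hs).hasDerivAt
      (Icc_mem_nhds hx.1 hx.2))

/-- No integrability is needed: otherwise the integral is `0 ≥ m (b - a)`. -/
theorem mul_sub_le_intervalIntegral_of_nonpos {f : ℝ → ℝ} {a b m : ℝ} (hab : a ≤ b)
    (hm : m ≤ 0) (hf : ∀ x ∈ Icc a b, m ≤ f x) : m * (b - a) ≤ ∫ x in a..b, f x := by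
  by_cases hfi : IntervalIntegrable f MeasureTheory.volume a b
  · simpa [mul_comm] using intervalIntegral.integral_mono_on hab intervalIntegrable_const hfi hf
  · rw [intervalIntegral.integral_undef hfi]
    exact mul_nonpos_of_nonpos_of_nonneg hm (sub_nonneg.2 hab)

theorem mul_le_mul_of_le_of_nonpos {a x y K : ℝ} (hax : a ≤ x) (ha : a ≤ 0) (hy : 0 ≤ y)
    (hyK : y ≤ K) : a * K ≤ x * y :=
  calc a * K ≤ a * y := mul_le_mul_of_nonpos_left hyK ha
    _ ≤ x * y := mul_le_mul_of_nonneg_right hax hy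

theorem stmt_3_general (A₀ δ : ℝ) (hA₀ : 0 < A₀)
    (H H' φ ξ : ℝ → ℝ)
    (hHdiff : ∀ t ∈ Set.Ico (0:ℝ) δ, HasDerivWithinAt H (H' t) (Set.Ico 0 δ) t)
    (hφ : ∀ t ∈ Set.Ico (0:ℝ) δ, A₀ / 4 < φ t)
    (hξpos : ∀ t ∈ Set.Ico (0:ℝ) δ, 0 < ξ t)
    (hξlt : ∀ t ∈ Set.Ico (0:ℝ) δ, ξ t < 4 * A₀)
    (hineq : ∀ t ∈ Set.Ico (0:ℝ) δ,
      H' t * φ t ≤ - ∫ s in (0:ℝ)..t, H s * ξ s)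
    (tm tp : ℝ) (htm : 0 ≤ tm) (hlt : tm < tp) (htp : tp < δ)
    (hHneg : H tm < 0)
    (hmin : ∀ t ∈ Set.Icc (0:ℝ) tp, H tm ≤ H t) :
    H tp ≤ H tm * (1 - 16 * δ ^ 2) := by
  have hsub : Icc tm tp ⊆ Ico 0 δ := fun x hx => ⟨htm.trans hx.1, hx.2.trans_lt htp⟩
  obtain ⟨c, ⟨htmc, hctp⟩, hslope⟩ :=
    exists_hasDerivWithinAt_eq_slope_of_Icc_subset hlt hsub hHdiff
  have hc0 : 0 ≤ c := htm.trans htmc.le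
  have hcδ : c ∈ Ico 0 δ := ⟨hc0, hctp.trans htp⟩
  have hintegral : H tm * (4 * A₀) * c ≤ ∫ s in (0:ℝ)..c, H s * ξ s := by
    have hintegrand : ∀ s ∈ Icc 0 c, H tm * (4 * A₀) ≤ H s * ξ s := fun s hs => by
      have hsδ : s ∈ Ico 0 δ := ⟨hs.1, (hs.2.trans hctp.le).trans_lt htp⟩
      exact mul_le_mul_of_le_of_nonpos (hmin s ⟨hs.1, hs.2.trans hctp.le⟩) hHneg.le
        (hξpos s hsδ).le (hξlt s hsδ).le
    simpa only [sub_zero] using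
      mul_sub_le_intervalIntegral_of_nonpos hc0
        (mul_nonpos_of_nonpos_of_nonneg hHneg.le (by positivity)) hintegrand
  have hderiv : H' c ≤ -16 * H tm * c := by
    have hbound : H' c * φ c ≤ -(H tm * (4 * A₀) * c) :=
      (hineq c hcδ).trans (neg_le_neg hintegral)
    nlinarith [hφ c hcδ, mul_nonneg (neg_nonneg.2 hHneg.le) hc0]
  have hstep : c * (tp - tm) ≤ δ ^ 2 := by nlinarith
  calc H tp = H tm + H' c * (tp - tm) := by
        rw [hslope, div_mul_cancel₀ _ (sub_ne_zero.2 hlt.ne')]; ring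
    _ ≤ H tm + -16 * H tm * c * (tp - tm) := by gcongr
    _ ≤ H tm * (1 - 16 * δ ^ 2) := by nlinarith

/-- The mean-value-theorem estimate in Case 1 of Claim 1 of Theorem 2:
if `H(tm) < 0` is the minimum of `H` on `[0,tp]`, then
`H(tp) ≤ H(tm)·(1 − 16·δ²)`. -/
theorem stmt_3 (A₀ δ : ℝ) (hA₀ : 0 < A₀) (hδ0 : 0 < δ) (hδ : δ < 1/4)
    (H H' φ ξ : ℝ → ℝ)
    (hHdiff : ∀ t ∈ Set.Ico (0:ℝ) δ, HasDerivWithinAt H (H' t) (Set.Ico 0 δ) t)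
    (hφcont : ContinuousOn φ (Set.Ico 0 δ))
    (hξcont : ContinuousOn ξ (Set.Ico 0 δ))
    (hφ : ∀ t ∈ Set.Ico (0:ℝ) δ, A₀ / 4 < φ t)
    (hξpos : ∀ t ∈ Set.Ico (0:ℝ) δ, 0 < ξ t)
    (hξlt : ∀ t ∈ Set.Ico (0:ℝ) δ, ξ t < 4 * A₀)
    (hineq : ∀ t ∈ Set.Ico (0:ℝ) δ,
      H' t * φ t ≤ - ∫ s in (0:ℝ)..t, H s * ξ s)
    (tm tp : ℝ) (htm : 0 ≤ tm) (hlt : tm < tp) (htp : tp < δ)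
    (hHneg : H tm < 0)
    (hmin : ∀ t ∈ Set.Icc (0:ℝ) tp, H tm ≤ H t) :
    H tp ≤ H tm * (1 - 16 * δ ^ 2) :=
  stmt_3_general A₀ δ hA₀ H H' φ ξ hHdiff hφ hξpos hξlt hineq tm tp htm hlt htp hHneg hmin
end

section
/- Let A₀ > 0 and 0 < δ < 1/4 be real numbers. Let H : ℝ → ℝ be differentiable on [0,δ) with H(0) = 0, and let φ, ξ : ℝ → ℝ be continuous on [0,δ) with φ(t) > A₀/4 and 0 < ξ(t) < 4·A₀ for all t ∈ [0,δ). Suppose H'(t)·φ(t) ≤ ∫₀ᵗ H(s)·ξ(s) ds for all t ∈ [0,δ). Then there is no t* ∈ (0,δ) such that H(t*) > 0 and H(s) ≤ H(t*) for all s ∈ [0,t*]. -/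
/-!
If `H` attained a positive maximum on `[0,t]` at `t < δ`, the mean value theorem would give
`c ∈ (0,t)` with `H'(c) = H(t)/t`. Bounding the integral by `c · 4A₀ · H(t)` and `φ(c)` from
below by `A₀/4` turns the integro-differential inequality into
`H(t) < 16 t c · H(t) < 16 δ² · H(t)`, impossible for `δ < 1/4`.
-/

open Set

theorem exists_hasDerivWithinAt_Ico_eq_slope {f f' : ℝ → ℝ} {a b t : ℝ}
    (hf : ∀ x ∈ Ico a b, HasDerivWithinAt f (f' x) (Ico a b) x) (hat : a < t) (htb : t < b) :
    ∃ c ∈ Ioo a t, f' c = (f t - f a) / (t - a) := by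
  have hsub : Icc a t ⊆ Ico a b := Icc_subset_Ico_right htb
  refine exists_hasDerivAt_eq_slope f f' hat
    (fun x hx => (hf x (hsub hx)).continuousWithinAt.mono hsub) fun x hx => ?_
  exact (hf x (Ioo_subset_Icc_self.trans hsub hx)).hasDerivAt
    (Ico_mem_nhds hx.1 (hx.2.trans htb))

theorem intervalIntegral.integral_le_sub_mul_of_le {f : ℝ → ℝ} {a b C : ℝ} (hab : a ≤ b)
    (hf : IntervalIntegrable f MeasureTheory.volume a b) (hC : ∀ x ∈ Icc a b, f x ≤ C) :
    ∫ x in a..b, f x ≤ (b - a) * C := by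
  calc ∫ x in a..b, f x ≤ ∫ _ in a..b, C :=
        integral_mono_on hab hf intervalIntegrable_const hC
    _ = (b - a) * C := by rw [integral_const, smul_eq_mul]

theorem stmt_4_general (A₀ δ : ℝ) (hA₀ : 0 < A₀) (hδ : δ < 1/4)
    (H H' φ ξ : ℝ → ℝ)
    (hHdiff : ∀ t ∈ Set.Ico (0:ℝ) δ, HasDerivWithinAt H (H' t) (Set.Ico 0 δ) t)
    (hH0 : H 0 = 0)
    (hξcont : ContinuousOn ξ (Set.Ico 0 δ))
    (hφ : ∀ t ∈ Set.Ico (0:ℝ) δ, A₀ / 4 < φ t)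
    (hξpos : ∀ t ∈ Set.Ico (0:ℝ) δ, 0 < ξ t)
    (hξlt : ∀ t ∈ Set.Ico (0:ℝ) δ, ξ t < 4 * A₀)
    (hineq : ∀ t ∈ Set.Ico (0:ℝ) δ,
      H' t * φ t ≤ ∫ s in (0:ℝ)..t, H s * ξ s) :
    ¬ ∃ tstar ∈ Set.Ioo (0:ℝ) δ,
      0 < H tstar ∧ ∀ s ∈ Set.Icc (0:ℝ) tstar, H s ≤ H tstar := by
  rintro ⟨t, ⟨ht0, htδ⟩, hHt, hmax⟩
  obtain ⟨c, ⟨hc0, hct⟩, hslope⟩ := exists_hasDerivWithinAt_Ico_eq_slope hHdiff ht0 htδ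
  rw [hH0, sub_zero, sub_zero, eq_div_iff ht0.ne'] at hslope
  have hH'c : 0 < H' c := pos_of_mul_pos_left (hslope ▸ hHt) ht0.le
  have hIcc : Icc 0 c ⊆ Ico 0 δ := Icc_subset_Ico_right (hct.trans htδ)
  have hHcont : ContinuousOn H (Icc 0 c) := fun x hx =>
    (hHdiff x (hIcc hx)).continuousWithinAt.mono hIcc
  have hint : ∫ s in (0:ℝ)..c, H s * ξ s ≤ c * (H t * (4 * A₀)) := by
    have h := intervalIntegral.integral_le_sub_mul_of_le hc0.le
      ((hHcont.mul (hξcont.mono hIcc)).intervalIntegrable_of_Icc hc0.le)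
      fun s hs => mul_le_mul (hmax s ⟨hs.1, hs.2.trans hct.le⟩) (hξlt s (hIcc hs)).le
        (hξpos s (hIcc hs)).le hHt.le
    rwa [sub_zero] at h
  have htc : t * c * 16 < 1 := by nlinarith
  have hc : c ∈ Ico 0 δ := hIcc ⟨hc0.le, le_rfl⟩
  refine lt_irrefl (H t * A₀ / 4) ?_
  calc H t * A₀ / 4 = t * (H' c * (A₀ / 4)) := by rw [← hslope]; ring
    _ < t * (H' c * φ c) := by gcongr; exact hφ c hc
    _ ≤ t * (c * (H t * (4 * A₀))) := mul_le_mul_of_nonneg_left ((hineq c hc).trans hint) ht0.le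
    _ = t * c * 16 * (H t * A₀ / 4) := by ring
    _ < H t * A₀ / 4 := mul_lt_of_lt_one_left (by positivity) htc

/-- The mean-value-theorem step in the proof of Claim 2 (Case 3 of Theorem 2):
there is no `t* ∈ (0,δ)` with `H(t*) > 0` which is a maximum of `H` on `[0,t*]`. -/
theorem stmt_4 (A₀ δ : ℝ) (hA₀ : 0 < A₀) (hδ0 : 0 < δ) (hδ : δ < 1/4)
    (H H' φ ξ : ℝ → ℝ)
    (hHdiff : ∀ t ∈ Set.Ico (0:ℝ) δ, HasDerivWithinAt H (H' t) (Set.Ico 0 δ) t)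
    (hH0 : H 0 = 0)
    (hφcont : ContinuousOn φ (Set.Ico 0 δ))
    (hξcont : ContinuousOn ξ (Set.Ico 0 δ))
    (hφ : ∀ t ∈ Set.Ico (0:ℝ) δ, A₀ / 4 < φ t)
    (hξpos : ∀ t ∈ Set.Ico (0:ℝ) δ, 0 < ξ t)
    (hξlt : ∀ t ∈ Set.Ico (0:ℝ) δ, ξ t < 4 * A₀)
    (hineq : ∀ t ∈ Set.Ico (0:ℝ) δ,
      H' t * φ t ≤ ∫ s in (0:ℝ)..t, H s * ξ s) :
    ¬ ∃ tstar ∈ Set.Ioo (0:ℝ) δ,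
      0 < H tstar ∧ ∀ s ∈ Set.Icc (0:ℝ) tstar, H s ≤ H tstar :=
  stmt_4_general A₀ δ hA₀ hδ H H' φ ξ hHdiff hH0 hξcont hφ hξpos hξlt hineq
end

section
/- Let A₀ > 0 and 0 < δ < 1/4 be real numbers. Let H : ℝ → ℝ be differentiable on [0,δ) with H(0) = 0, and let φ, ξ : ℝ → ℝ be continuous on [0,δ) with φ(t) > A₀/4 and 0 < ξ(t) < 4·A₀ for all t ∈ [0,δ). Define A(t) := A₀ + ∫₀ᵗ H(s)·ξ(s) ds. Suppose H'(t)·φ(t) ≤ −∫₀ᵗ H(s)·ξ(s) ds for all t ∈ [0,δ). If there exists t₊ ∈ (0,δ) with H(t₊) > 0, then there exists t₋ ∈ [0,t₊) with H(t₋) < 0; equivalently, the minimum of H over [0,t₊] is strictly negative. -/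
/-!
If `H` were nonnegative on `[0, tp]`, the integral `∫₀ᵗ H ξ` would be nonnegative there, so the
inequality forces `H' ≤ 0`; then `H` is antitone on `[0, tp]` and `H tp ≤ H 0 = 0`.
-/

open Set

theorem antitoneOn_of_mul_le_neg_integral {H H' φ ξ : ℝ → ℝ} {a b : ℝ}
    (hHcont : ContinuousOn H (Icc a b))
    (hHderiv : ∀ t ∈ Ioo a b, HasDerivWithinAt H (H' t) (Ioo a b) t)
    (hHnonneg : ∀ t ∈ Icc a b, 0 ≤ H t) (hφ : ∀ t ∈ Ioo a b, 0 < φ t)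
    (hξ : ∀ t ∈ Icc a b, 0 ≤ ξ t)
    (hineq : ∀ t ∈ Ioo a b, H' t * φ t ≤ -∫ s in a..t, H s * ξ s) :
    AntitoneOn H (Icc a b) := by
  refine antitoneOn_of_hasDerivWithinAt_nonpos (convex_Icc a b) hHcont
    (by simpa only [interior_Icc] using hHderiv) fun t ht ↦ ?_
  rw [interior_Icc] at ht
  have hint : 0 ≤ ∫ s in a..t, H s * ξ s :=
    intervalIntegral.integral_nonneg ht.1.le fun s hs ↦
      have hs' : s ∈ Icc a b := ⟨hs.1, hs.2.trans ht.2.le⟩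
      mul_nonneg (hHnonneg s hs') (hξ s hs')
  exact nonpos_of_mul_nonpos_left ((hineq t ht).trans (neg_nonpos.2 hint)) (hφ t ht)

theorem stmt_5_general (A₀ δ : ℝ) (hA₀ : 0 < A₀)
    (H H' φ ξ : ℝ → ℝ)
    (hHdiff : ∀ t ∈ Set.Ico (0:ℝ) δ, HasDerivWithinAt H (H' t) (Set.Ico 0 δ) t)
    (hH0 : H 0 = 0)
    (hφ : ∀ t ∈ Set.Ico (0:ℝ) δ, A₀ / 4 < φ t)
    (hξpos : ∀ t ∈ Set.Ico (0:ℝ) δ, 0 < ξ t)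
    (hineq : ∀ t ∈ Set.Ico (0:ℝ) δ,
      H' t * φ t ≤ - ∫ s in (0:ℝ)..t, H s * ξ s)
    (tp : ℝ) (htp : tp ∈ Set.Ioo (0:ℝ) δ) (hHpos : 0 < H tp) :
    ∃ tm ∈ Set.Ico (0:ℝ) tp, H tm < 0 := by
  by_contra! hcon
  have hIcc : Icc 0 tp ⊆ Ico 0 δ := Icc_subset_Ico_right htp.2
  have hIoo : Ioo 0 tp ⊆ Ico 0 δ := Ioo_subset_Icc_self.trans hIcc
  have hHnonneg : ∀ t ∈ Icc 0 tp, 0 ≤ H t := fun t ht ↦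
    ht.2.eq_or_lt.elim (fun h ↦ h ▸ hHpos.le) fun h ↦ hcon t ⟨ht.1, h⟩
  have hanti : AntitoneOn H (Icc 0 tp) :=
    antitoneOn_of_mul_le_neg_integral
      (fun t ht ↦ (hHdiff t (hIcc ht)).continuousWithinAt.mono hIcc)
      (fun t ht ↦ (hHdiff t (hIoo ht)).mono hIoo) hHnonneg
      (fun t ht ↦ (by positivity : (0 : ℝ) < A₀ / 4).trans (hφ t (hIoo ht)))
      (fun t ht ↦ (hξpos t (hIcc ht)).le) (fun t ht ↦ hineq t (hIoo ht))
  have := hanti (left_mem_Icc.2 htp.1.le) (right_mem_Icc.2 htp.1.le) htp.1.le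
  linarith

/-- The intermediate observation in Case 1 of Claim 1 of Theorem 2:
if `H(tp) > 0` for some `tp ∈ (0,δ)`, then `H` is strictly negative somewhere
in `[0,tp)`; equivalently, the minimum of `H` on `[0,tp]` is strictly negative. -/
theorem stmt_5 (A₀ δ : ℝ) (hA₀ : 0 < A₀) (hδ0 : 0 < δ) (hδ : δ < 1/4)
    (H H' φ ξ : ℝ → ℝ)
    (hHdiff : ∀ t ∈ Set.Ico (0:ℝ) δ, HasDerivWithinAt H (H' t) (Set.Ico 0 δ) t)
    (hH0 : H 0 = 0)
    (hφcont : ContinuousOn φ (Set.Ico 0 δ))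
    (hξcont : ContinuousOn ξ (Set.Ico 0 δ))
    (hφ : ∀ t ∈ Set.Ico (0:ℝ) δ, A₀ / 4 < φ t)
    (hξpos : ∀ t ∈ Set.Ico (0:ℝ) δ, 0 < ξ t)
    (hξlt : ∀ t ∈ Set.Ico (0:ℝ) δ, ξ t < 4 * A₀)
    (A : ℝ → ℝ) (hA : ∀ t, A t = A₀ + ∫ s in (0:ℝ)..t, H s * ξ s)
    (hineq : ∀ t ∈ Set.Ico (0:ℝ) δ,
      H' t * φ t ≤ - ∫ s in (0:ℝ)..t, H s * ξ s)
    (tp : ℝ) (htp : tp ∈ Set.Ioo (0:ℝ) δ) (hHpos : 0 < H tp) :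
    ∃ tm ∈ Set.Ico (0:ℝ) tp, H tm < 0 :=
  stmt_5_general A₀ δ hA₀ H H' φ ξ hHdiff hH0 hφ hξpos hineq tp htp hHpos
end

section
/- Let A₀ > 0 and 0 < δ < 1/4 be real numbers. Let H : ℝ → ℝ be differentiable on (−δ,δ) with H(0) = 0, and let φ, ξ : ℝ → ℝ be continuous on (−δ,δ) with φ(t) > A₀/4 and 0 < ξ(t) < 4·A₀ for all t ∈ (−δ,δ). Define A(t) := A₀ + ∫₀ᵗ H(s)·ξ(s) ds. If H'(t)·φ(t) ≤ −∫₀ᵗ H(s)·ξ(s) ds for all t ∈ (−δ,δ), then H(t) ≤ 0 for all t ∈ [0,δ), H(t) ≥ 0 for all t ∈ (−δ,0], and consequently A(t) ≤ A₀ for all t ∈ (−δ,δ). -/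
/-!
Let `-m ≤ 0` be the minimum of `H` on `[0, t]`, attained at `s₀`. Since `0 ≤ ξ ≤ 4A₀`,
the integral `∫₀ˢ H ξ` is at least `-4A₀ m s`, so the inequality together with `φ > A₀/4`
bounds `H'` by `16 m t` on `[0, t]`. By the mean value theorem
`H t ≤ H s₀ + 16 m t (t - s₀) ≤ -m + 16 m δ² ≤ 0`. The case `t ≤ 0` follows by applying
this to `t ↦ -H (-t)`, and the sign of `H` on either side of `0` makes `∫₀ᵗ H ξ ≤ 0`.
-/

open Set

theorem nonpos_of_deriv_le_mul_of_forall_ge_neg {t C : ℝ} (ht : 0 ≤ t) (hCt : C * t ≤ 1)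
    {H H' : ℝ → ℝ} (hHc : ContinuousOn H (Icc 0 t))
    (hH : ∀ s ∈ Ioo 0 t, HasDerivAt H (H' s) s) (hH0 : H 0 = 0)
    (hH' : ∀ m, 0 ≤ m → (∀ s ∈ Icc 0 t, -m ≤ H s) → ∀ s ∈ Ioo 0 t, H' s ≤ C * m) :
    H t ≤ 0 := by
  obtain ⟨s₀, hs₀, hmin⟩ := isCompact_Icc.exists_isMinOn (nonempty_Icc.2 ht) hHc
  have hmin' : ∀ s ∈ Icc 0 t, H s₀ ≤ H s := fun s hs => hmin hs
  have hm : 0 ≤ -H s₀ := by linarith [hmin' 0 (left_mem_Icc.2 ht)]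
  have hderiv := hH' (-H s₀) hm (fun s hs => by linarith [hmin' s hs])
  have hmvt : H t - H s₀ ≤ C * -H s₀ * (t - s₀) := by
    refine (convex_Icc 0 t).image_sub_le_mul_sub_of_deriv_le hHc ?_ ?_ s₀ hs₀ t
      (right_mem_Icc.2 ht) hs₀.2
    · rw [interior_Icc]
      exact fun s hs => (hH s hs).differentiableAt.differentiableWithinAt
    · rw [interior_Icc]
      exact fun s hs => (hH s hs).deriv ▸ hderiv s hs
  rcases le_or_gt 0 C with hC | hC
  · nlinarith [mul_nonneg (mul_nonneg hC hm) hs₀.1]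
  · nlinarith [mul_nonneg hm (sub_nonneg.2 hs₀.2)]

theorem neg_mul_le_integral_mul {H ξ : ℝ → ℝ} {b m s : ℝ} (hs : 0 ≤ s) (hm : 0 ≤ m)
    (hHc : ContinuousOn H (Icc 0 s)) (hξc : ContinuousOn ξ (Icc 0 s))
    (hH : ∀ u ∈ Icc 0 s, -m ≤ H u) (hξ0 : ∀ u ∈ Icc 0 s, 0 ≤ ξ u)
    (hξb : ∀ u ∈ Icc 0 s, ξ u ≤ b) :
    -(b * m) * s ≤ ∫ u in 0..s, H u * ξ u := by
  have hint : IntervalIntegrable (fun u => H u * ξ u) MeasureTheory.volume 0 s :=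
    (hHc.mul hξc).intervalIntegrable_of_Icc hs
  have hmono := intervalIntegral.integral_mono_on hs intervalIntegrable_const hint
    fun u hu => show -(b * m) ≤ H u * ξ u by
      nlinarith [mul_nonneg (neg_le_iff_add_nonneg.1 (hH u hu)) (hξ0 u hu), hξb u hu]
  rw [intervalIntegral.integral_const, smul_eq_mul, sub_zero] at hmono
  linarith

theorem nonpos_of_deriv_mul_le_neg_integral {a b T : ℝ} (ha : 0 < a) (hT : b * T ^ 2 ≤ a)
    {H H' φ ξ : ℝ → ℝ} (hH : ∀ t ∈ Ico 0 T, HasDerivAt H (H' t) t) (hH0 : H 0 = 0)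
    (hξc : ContinuousOn ξ (Ico 0 T)) (hφ : ∀ t ∈ Ico 0 T, a ≤ φ t)
    (hξ0 : ∀ t ∈ Ico 0 T, 0 ≤ ξ t) (hξb : ∀ t ∈ Ico 0 T, ξ t ≤ b)
    (hineq : ∀ t ∈ Ico 0 T, H' t * φ t ≤ -∫ s in 0..t, H s * ξ s) :
    ∀ t ∈ Ico 0 T, H t ≤ 0 := by
  intro t ht
  have hsub : Icc 0 t ⊆ Ico 0 T := Icc_subset_Ico_right ht.2
  have hHc : ContinuousOn H (Icc 0 t) := fun s hs =>
    (hH s (hsub hs)).continuousAt.continuousWithinAt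
  have hb : 0 ≤ b := (hξ0 t ht).trans (hξb t ht)
  have hbt : b * t * t ≤ a := by
    nlinarith [mul_le_mul_of_nonneg_left (mul_self_le_mul_self ht.1 ht.2.le) hb]
  refine nonpos_of_deriv_le_mul_of_forall_ge_neg (C := b * t / a) ht.1
    (by rwa [div_mul_eq_mul_div, div_le_one ha]) hHc
    (fun s hs => hH s (hsub (Ioo_subset_Icc_self hs))) hH0 fun m hm hHm s hs => ?_
  have hs' : s ∈ Ico 0 T := hsub (Ioo_subset_Icc_self hs)
  have hsub' : Icc 0 s ⊆ Icc 0 t := Icc_subset_Icc_right hs.2.le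
  have hlow := neg_mul_le_integral_mul hs.1.le hm (hHc.mono hsub')
    (hξc.mono (hsub'.trans hsub)) (fun u hu => hHm u (hsub' hu))
    (fun u hu => hξ0 u (hsub (hsub' hu))) (fun u hu => hξb u (hsub (hsub' hu)))
  have hH'φ : H' s * φ s ≤ b * m * t := by
    nlinarith [hineq s hs', mul_le_mul_of_nonneg_left hs.2.le (mul_nonneg hb hm)]
  rw [div_mul_eq_mul_div, le_div_iff₀ ha]
  rcases le_or_gt (H' s) 0 with hneg | hpos
  · nlinarith [mul_nonneg (mul_nonneg hb ht.1) hm]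
  · nlinarith [mul_le_mul_of_nonneg_left (hφ s hs') hpos.le]

theorem intervalIntegral.integral_zero_neg_comp_neg (f : ℝ → ℝ) (t : ℝ) :
    ∫ s in 0..t, -f (-s) = ∫ s in 0..-t, f s := by
  rw [intervalIntegral.integral_neg, intervalIntegral.integral_comp_neg, neg_zero,
    ← intervalIntegral.integral_symm]

theorem nonneg_of_deriv_mul_le_neg_integral {a b T : ℝ} (ha : 0 < a) (hT : b * T ^ 2 ≤ a)
    {H H' φ ξ : ℝ → ℝ} (hH : ∀ t ∈ Ioc (-T) 0, HasDerivAt H (H' t) t) (hH0 : H 0 = 0)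
    (hξc : ContinuousOn ξ (Ioc (-T) 0)) (hφ : ∀ t ∈ Ioc (-T) 0, a ≤ φ t)
    (hξ0 : ∀ t ∈ Ioc (-T) 0, 0 ≤ ξ t) (hξb : ∀ t ∈ Ioc (-T) 0, ξ t ≤ b)
    (hineq : ∀ t ∈ Ioc (-T) 0, H' t * φ t ≤ -∫ s in 0..t, H s * ξ s) :
    ∀ t ∈ Ioc (-T) 0, 0 ≤ H t := by
  have hneg : ∀ t ∈ Ico 0 T, -t ∈ Ioc (-T) 0 := fun t ht => ⟨neg_lt_neg ht.2, neg_nonpos.2 ht.1⟩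
  have hrefl := nonpos_of_deriv_mul_le_neg_integral ha hT (H := fun t => -H (-t))
    (H' := fun t => H' (-t)) (φ := fun t => φ (-t)) (ξ := fun t => ξ (-t))
    (fun t ht => by
      simpa [Function.comp_def] using ((hH (-t) (hneg t ht)).comp t (hasDerivAt_neg t)).fun_neg)
    (by simp [hH0]) (hξc.comp continuous_neg.continuousOn hneg)
    (fun t ht => hφ _ (hneg t ht)) (fun t ht => hξ0 _ (hneg t ht)) (fun t ht => hξb _ (hneg t ht))
    fun t ht => by
      simpa only [neg_mul, intervalIntegral.integral_zero_neg_comp_neg (fun s => H s * ξ s)]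
        using hineq _ (hneg t ht)
  intro t ht
  simpa using hrefl (-t) ⟨neg_nonneg.2 ht.2, neg_lt.1 ht.1⟩

theorem intervalIntegral.integral_nonpos_of_nonpos_of_nonneg {f : ℝ → ℝ} {t : ℝ}
    (hright : 0 ≤ t → ∀ s ∈ Icc 0 t, f s ≤ 0) (hleft : t ≤ 0 → ∀ s ∈ Icc t 0, 0 ≤ f s) :
    ∫ s in 0..t, f s ≤ 0 := by
  rcases le_total 0 t with ht | ht
  · simpa using intervalIntegral.integral_nonneg ht fun s hs => neg_nonneg.2 (hright ht s hs)
  · rw [intervalIntegral.integral_symm, neg_nonpos]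
    exact intervalIntegral.integral_nonneg ht (hleft ht)

theorem stmt_6_general (A₀ δ : ℝ) (hA₀ : 0 < A₀) (hδ0 : 0 < δ) (hδ : δ < 1/4)
    (H H' φ ξ : ℝ → ℝ)
    (hHdiff : ∀ t ∈ Set.Ioo (-δ) δ, HasDerivAt H (H' t) t)
    (hH0 : H 0 = 0)
    (hξcont : ContinuousOn ξ (Set.Ioo (-δ) δ))
    (hφ : ∀ t ∈ Set.Ioo (-δ) δ, A₀ / 4 < φ t)
    (hξpos : ∀ t ∈ Set.Ioo (-δ) δ, 0 < ξ t)
    (hξlt : ∀ t ∈ Set.Ioo (-δ) δ, ξ t < 4 * A₀)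
    (A : ℝ → ℝ) (hA : ∀ t, A t = A₀ + ∫ s in (0:ℝ)..t, H s * ξ s)
    (hineq : ∀ t ∈ Set.Ioo (-δ) δ,
      H' t * φ t ≤ - ∫ s in (0:ℝ)..t, H s * ξ s) :
    (∀ t ∈ Set.Ico (0:ℝ) δ, H t ≤ 0) ∧
    (∀ t ∈ Set.Ioc (-δ) (0:ℝ), 0 ≤ H t) ∧
    (∀ t ∈ Set.Ioo (-δ) δ, A t ≤ A₀) := by
  have hA₀4 : 0 < A₀ / 4 := by positivity
  have hδA₀ : 4 * A₀ * δ ^ 2 ≤ A₀ / 4 := by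
    have hδ2 : δ ^ 2 ≤ 1 / 16 := by nlinarith
    nlinarith [mul_le_mul_of_nonneg_left hδ2 hA₀.le]
  have hIco : Ico 0 δ ⊆ Ioo (-δ) δ := fun t ht => ⟨by linarith [ht.1], ht.2⟩
  have hIoc : Ioc (-δ) 0 ⊆ Ioo (-δ) δ := fun t ht => ⟨ht.1, by linarith [ht.2]⟩
  have hright := nonpos_of_deriv_mul_le_neg_integral hA₀4 hδA₀ (fun t ht => hHdiff t (hIco ht))
    hH0 (hξcont.mono hIco) (fun t ht => (hφ t (hIco ht)).le) (fun t ht => (hξpos t (hIco ht)).le)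
    (fun t ht => (hξlt t (hIco ht)).le) (fun t ht => hineq t (hIco ht))
  have hleft := nonneg_of_deriv_mul_le_neg_integral hA₀4 hδA₀ (fun t ht => hHdiff t (hIoc ht))
    hH0 (hξcont.mono hIoc) (fun t ht => (hφ t (hIoc ht)).le) (fun t ht => (hξpos t (hIoc ht)).le)
    (fun t ht => (hξlt t (hIoc ht)).le) (fun t ht => hineq t (hIoc ht))
  refine ⟨hright, hleft, fun t ht => ?_⟩
  rw [hA t, add_le_iff_nonpos_right]
  refine intervalIntegral.integral_nonpos_of_nonpos_of_nonneg (fun _ s hs => ?_) fun _ s hs => ?_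
  · have hs' : s ∈ Ico 0 δ := ⟨hs.1, hs.2.trans_lt ht.2⟩
    exact mul_nonpos_of_nonpos_of_nonneg (hright s hs') (hξpos s (hIco hs')).le
  · have hs' : s ∈ Ioc (-δ) 0 := ⟨ht.1.trans_le hs.1, hs.2⟩
    exact mul_nonneg (hleft s hs') (hξpos s (hIoc hs')).le

/-- The full two-sided analytic content of Theorem 2 in the case `R₀ > 0`:
the integro-differential inequality `H'(t)·φ(t) ≤ −∫₀ᵗ H(s)·ξ(s) ds` on `(−δ,δ)`
forces `H ≤ 0` on `[0,δ)`, `H ≥ 0` on `(−δ,0]`, and hence the area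
`A(t) = A₀ + ∫₀ᵗ H(s)·ξ(s) ds` satisfies `A(t) ≤ A₀` on `(−δ,δ)`. -/
theorem stmt_6 (A₀ δ : ℝ) (hA₀ : 0 < A₀) (hδ0 : 0 < δ) (hδ : δ < 1/4)
    (H H' φ ξ : ℝ → ℝ)
    (hHdiff : ∀ t ∈ Set.Ioo (-δ) δ, HasDerivAt H (H' t) t)
    (hH0 : H 0 = 0)
    (hφcont : ContinuousOn φ (Set.Ioo (-δ) δ))
    (hξcont : ContinuousOn ξ (Set.Ioo (-δ) δ))
    (hφ : ∀ t ∈ Set.Ioo (-δ) δ, A₀ / 4 < φ t)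
    (hξpos : ∀ t ∈ Set.Ioo (-δ) δ, 0 < ξ t)
    (hξlt : ∀ t ∈ Set.Ioo (-δ) δ, ξ t < 4 * A₀)
    (A : ℝ → ℝ) (hA : ∀ t, A t = A₀ + ∫ s in (0:ℝ)..t, H s * ξ s)
    (hineq : ∀ t ∈ Set.Ioo (-δ) δ,
      H' t * φ t ≤ - ∫ s in (0:ℝ)..t, H s * ξ s) :
    (∀ t ∈ Set.Ico (0:ℝ) δ, H t ≤ 0) ∧
    (∀ t ∈ Set.Ioc (-δ) (0:ℝ), 0 ≤ H t) ∧
    (∀ t ∈ Set.Ioo (-δ) δ, A t ≤ A₀) :=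
  stmt_6_general A₀ δ hA₀ hδ0 hδ H H' φ ξ hHdiff hH0 hξcont hφ hξpos hξlt A hA hineq
end
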